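/- Any Euler field E on the 2-dimensional F-manifold germ I₂(m) (m ≥ 3), given by (ℂ²,0) with coordinates (t₁,t₂), e = ∂₁ and ∂₂∘∂₂ = t₂^{m−2}·e, has the form E = (t₁ + c₁)∂₁ + (2/m)t₂∂₂ for some c₁ ∈ ℂ. Equivalently: a vector field E = f₁(t)∂₁ + f₂(t)∂₂ satisfies Lie_E(∘) = ∘ on this F-manifold if and only if f₁ = t₁ + c₁ and f₂ = (2/m)t₂. -/

import Mathlib

/-!
Testing `Lie_E(∘) = ∘` on the constant fields `(∂₁, ∂₁)` gives `∂₁E = ∂₁`, and on `(∂₂, ∂₂)`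
gives `∂₂E₁ = 0` together with `(m-2) t₂^{m-3} E₂ + 2 t₂^{m-2} ∂₂E₂ = 2 t₂^{m-2}`. Hence
`E₁ - t₁` is constant, and for `g = E₂ - (2/m) t₂` the last equation becomes
`(m-2) t₂^{m-3} g + 2 t₂^{m-2} ∂₂g = 0`, so `g² t₂^{m-2}` is a first integral of `E`. It vanishes
at the origin, hence on `U`, so `g = 0` off the hyperplane `t₂ = 0`, and everywhere by continuity.
Conversely, for `E = (t₁ + c₁)∂₁ + (2/m) t₂∂₂` the identity follows from the Leibniz rule, since
`E(t₂^{m-2}) = (2(m-2)/m) t₂^{m-2}`.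

Coordinates are indexed from `0`: `t₁ = t 0`, `t₂ = t 1`, `∂₁ = ![1, 0]`, `∂₂ = ![0, 1]`.
-/

open Matrix

noncomputable section

/-- The multiplication of the F-manifold `I₂(m)`: `∂₁` is the unit and
`∂₂∘∂₂ = t₂^{m−2}·∂₁`, extended function-bilinearly to vector fields on `ℂ²`. -/
def vmulI2 (m : ℕ) (X Y : (Fin 2 → ℂ) → (Fin 2 → ℂ)) : (Fin 2 → ℂ) → Fin 2 → ℂ :=
  fun t => ![X t 0 * Y t 0 + t 1 ^ (m - 2) * (X t 1 * Y t 1),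
             X t 0 * Y t 1 + X t 1 * Y t 0]

/-- The Lie bracket of vector fields on `ℂ²`. -/
def vbracket (X Y : (Fin 2 → ℂ) → (Fin 2 → ℂ)) : (Fin 2 → ℂ) → Fin 2 → ℂ :=
  fun t i => ∑ j : Fin 2,
    (X t j * fderiv ℂ (fun s => Y s i) t (Pi.single j 1)
      - Y t j * fderiv ℂ (fun s => X s i) t (Pi.single j 1))

local notation "ℂ²" => Fin 2 → ℂ

/-- `(Lie_E ∘)(X, Y) = [E, X∘Y] - [E, X]∘Y - X∘[E, Y]`, tested on holomorphic fields on `U`. -/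
def IsEulerField (m : ℕ) (U : Set ℂ²) (E : ℂ² → ℂ²) : Prop :=
  ∀ X Y : ℂ² → ℂ²,
    (∀ i, DifferentiableOn ℂ (fun t => X t i) U) →
    (∀ i, DifferentiableOn ℂ (fun t => Y t i) U) →
    ∀ t ∈ U, vbracket E (vmulI2 m X Y) t - vmulI2 m (vbracket E X) Y t
      - vmulI2 m X (vbracket E Y) t = vmulI2 m X Y t

theorem ContinuousLinearMap.apply_eq_sum_single {ι R M : Type*} [Fintype ι] [DecidableEq ι]
    [Semiring R] [TopologicalSpace R] [AddCommMonoid M] [TopologicalSpace M] [Module R M]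
    (L : (ι → R) →L[R] M) (v : ι → R) : L v = ∑ j, v j • L (Pi.single j 1) := by
  conv_lhs => rw [pi_eq_sum_univ' v]
  simp only [map_sum, map_smul]

theorem ContinuousLinearMap.apply_eq_fin_two {R M : Type*} [Semiring R] [TopologicalSpace R]
    [AddCommMonoid M] [TopologicalSpace M] [Module R M] (L : (Fin 2 → R) →L[R] M)
    (v : Fin 2 → R) : L v = v 0 • L ![1, 0] + v 1 • L ![0, 1] := by
  have h0 : (Pi.single 0 1 : Fin 2 → R) = ![1, 0] := by ext i; fin_cases i <;> simp
  have h1 : (Pi.single 1 1 : Fin 2 → R) = ![0, 1] := by ext i; fin_cases i <;> simp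
  rw [L.apply_eq_sum_single, Fin.sum_univ_two, h0, h1]

theorem natCast_mul_pow_sub_one_mul {R : Type*} [CommSemiring R] (n : ℕ) (x : R) :
    n * x ^ (n - 1) * x = n * x ^ n := by
  rcases n with _ | n
  · simp
  · rw [mul_assoc, Nat.add_sub_cancel, ← pow_succ]

theorem two_div_mul_natCast_sub_two_add_two {m : ℕ} (hm : 2 ≤ m) :
    2 / (m : ℂ) * ((m - 2 : ℕ) + 2) = 2 := by
  rw [← Nat.cast_ofNat, ← Nat.cast_add, Nat.sub_add_cancel hm]
  exact div_mul_cancel₀ _ (by norm_cast; omega)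

theorem fderiv_apply_pow_apply (n : ℕ) (j : Fin 2) (t v : ℂ²) :
    fderiv ℂ (fun s : ℂ² => s j ^ n) t v = n * t j ^ (n - 1) * v j := by
  rw [((hasFDerivAt_apply j t).pow n).fderiv]
  simp only [nsmul_eq_mul, _root_.smul_apply, ContinuousLinearMap.proj_apply, smul_eq_mul,
    mul_comm]

theorem ContinuousOn.eqOn_zero_of_apply_ne_zero {ι 𝕜 F : Type*} [NontriviallyNormedField 𝕜]
    [TopologicalSpace F] [T2Space F] [Zero F] {U : Set (ι → 𝕜)} {f : (ι → 𝕜) → F}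
    (hf : ContinuousOn f U) (hU : IsOpen U) (j : ι) (h : ∀ t ∈ U, t j ≠ 0 → f t = 0) :
    ∀ t ∈ U, f t = 0 := by
  have hdense : Dense {t : ι → 𝕜 | t j ≠ 0} :=
    (dense_compl_singleton 0).preimage (isOpenMap_eval j)
  exact Set.EqOn.of_subset_closure (fun t ht => h t ht.1 ht.2) hf continuousOn_const
    Set.inter_subset_left (hdense.open_subset_closure_inter hU)

theorem vbracket_apply (X Y : ℂ² → ℂ²) (t : ℂ²) (i : Fin 2) :
    vbracket X Y t i
      = fderiv ℂ (fun s => Y s i) t (X t) - fderiv ℂ (fun s => X s i) t (Y t) := by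
  simp only [vbracket, Finset.sum_sub_distrib, ContinuousLinearMap.apply_eq_sum_single _ (X t),
    ContinuousLinearMap.apply_eq_sum_single _ (Y t), smul_eq_mul]

theorem vmulI2_unit_right (m : ℕ) (X : ℂ² → ℂ²) : vmulI2 m X (fun _ => ![1, 0]) = X := by
  funext t i; fin_cases i <;> simp [vmulI2]

theorem vmulI2_unit_left (m : ℕ) (X : ℂ² → ℂ²) : vmulI2 m (fun _ => ![1, 0]) X = X := by
  funext t i; fin_cases i <;> simp [vmulI2]

theorem fderiv_vmulI2_zero_apply (m : ℕ) {X Y : ℂ² → ℂ²} {t : ℂ²}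
    (hX : ∀ i, DifferentiableAt ℂ (fun s => X s i) t)
    (hY : ∀ i, DifferentiableAt ℂ (fun s => Y s i) t) (v : ℂ²) :
    fderiv ℂ (fun s => vmulI2 m X Y s 0) t v
      = fderiv ℂ (fun s => X s 0) t v * Y t 0 + X t 0 * fderiv ℂ (fun s => Y s 0) t v
        + (m - 2 : ℕ) * t 1 ^ (m - 2 - 1) * v 1 * (X t 1 * Y t 1)
        + t 1 ^ (m - 2) * (fderiv ℂ (fun s => X s 1) t v * Y t 1
          + X t 1 * fderiv ℂ (fun s => Y s 1) t v) := by
  have h : HasFDerivAt (fun s => vmulI2 m X Y s 0) _ t :=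
    ((hX 0).hasFDerivAt.fun_mul (hY 0).hasFDerivAt).fun_add
      (((hasFDerivAt_apply 1 t).pow (m - 2)).fun_mul
        ((hX 1).hasFDerivAt.fun_mul (hY 1).hasFDerivAt))
  rw [h.fderiv]
  simp only [smul_add, nsmul_eq_mul, _root_.add_apply, _root_.smul_apply,
    smul_eq_mul, ContinuousLinearMap.proj_apply]
  ring

theorem fderiv_vmulI2_one_apply (m : ℕ) {X Y : ℂ² → ℂ²} {t : ℂ²}
    (hX : ∀ i, DifferentiableAt ℂ (fun s => X s i) t)
    (hY : ∀ i, DifferentiableAt ℂ (fun s => Y s i) t) (v : ℂ²) :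
    fderiv ℂ (fun s => vmulI2 m X Y s 1) t v
      = fderiv ℂ (fun s => X s 0) t v * Y t 1 + X t 0 * fderiv ℂ (fun s => Y s 1) t v
        + fderiv ℂ (fun s => X s 1) t v * Y t 0 + X t 1 * fderiv ℂ (fun s => Y s 0) t v := by
  have h : HasFDerivAt (fun s => vmulI2 m X Y s 1) _ t :=
    ((hX 0).hasFDerivAt.fun_mul (hY 1).hasFDerivAt).fun_add
      ((hX 1).hasFDerivAt.fun_mul (hY 0).hasFDerivAt)
  rw [h.fderiv]
  simp only [_root_.add_apply, _root_.smul_apply, smul_eq_mul]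
  ring

namespace IsEulerField

variable {m : ℕ} {U : Set ℂ²} {E : ℂ² → ℂ²}

theorem fderiv_apply_e₁ (H : IsEulerField m U E) {t : ℂ²} (ht : t ∈ U) (i : Fin 2) :
    fderiv ℂ (fun s => E s i) t ![1, 0] = ![1, 0] i := by
  have h := H (fun _ => ![1, 0]) (fun _ => ![1, 0])
    (fun _ => differentiableOn_const _) (fun _ => differentiableOn_const _) t ht
  rw [vmulI2_unit_right, vmulI2_unit_right, vmulI2_unit_left] at h
  simpa [vbracket_apply] using congrFun h i

theorem fderiv_apply_e₂ (H : IsEulerField m U E) {t : ℂ²} (ht : t ∈ U) :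
    fderiv ℂ (fun s => E s 0) t ![0, 1] = 0 ∧
      (m - 2 : ℕ) * t 1 ^ (m - 2 - 1) * E t 1
          + 2 * t 1 ^ (m - 2) * fderiv ℂ (fun s => E s 1) t ![0, 1]
        = 2 * t 1 ^ (m - 2) := by
  have h := H (fun _ => ![0, 1]) (fun _ => ![0, 1])
    (fun _ => differentiableOn_const _) (fun _ => differentiableOn_const _) t ht
  have hsq : vmulI2 m (fun _ => ![0, 1]) (fun _ => ![0, 1]) = fun s => ![s 1 ^ (m - 2), 0] := by
    funext s i; fin_cases i <;> simp [vmulI2]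
  rw [hsq] at h
  have h0 := congrFun h 0
  have h1 := congrFun h 1
  have u0 := H.fderiv_apply_e₁ ht 0
  have u1 := H.fderiv_apply_e₁ ht 1
  simp only [Pi.sub_apply, vbracket_apply, vmulI2] at h0 h1
  simp only [cons_val_zero, cons_val_one, cons_val_fin_one, fderiv_apply_pow_apply,
    fderiv_fun_const, Pi.zero_apply, _root_.zero_apply, zero_sub, mul_zero, mul_one, mul_neg, zero_add,
    add_zero, sub_neg_eq_add, zero_mul, neg_zero, one_mul] at h0 h1 u0 u1
  rw [show ![t 1 ^ (m - 2), 0] = t 1 ^ (m - 2) • ![1, 0] by simp] at h0 h1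
  simp only [map_smul, u0, u1, smul_eq_mul] at h0 h1
  exact ⟨by linear_combination h1 / 2, by linear_combination h0⟩

theorem fderiv_first_eq_proj (H : IsEulerField m U E) {t : ℂ²} (ht : t ∈ U) :
    fderiv ℂ (fun s => E s 0) t = ContinuousLinearMap.proj 0 := by
  ext v
  rw [ContinuousLinearMap.apply_eq_fin_two, H.fderiv_apply_e₁ ht, (H.fderiv_apply_e₂ ht).1]
  simp only [cons_val_zero, smul_eq_mul, mul_one, mul_zero, add_zero,
    ContinuousLinearMap.proj_apply]

theorem exists_eq_add_first (hU : IsOpen U) (hUc : IsPreconnected U)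
    (hE : DifferentiableOn ℂ (fun t => E t 0) U) (H : IsEulerField m U E) :
    ∃ c, ∀ t ∈ U, E t 0 = t 0 + c :=
  hU.exists_eq_add_of_fderiv_eq hUc hE (differentiableOn_apply 0 U) fun t ht => by
    rw [H.fderiv_first_eq_proj ht, (hasFDerivAt_apply 0 t).fderiv]

theorem fderiv_first_integral_eq_zero (hm : 2 ≤ m) (hU : IsOpen U)
    (hE : DifferentiableOn ℂ (fun t => E t 1) U) (H : IsEulerField m U E) {t : ℂ²} (ht : t ∈ U) :
    fderiv ℂ (fun s => (E s 1 - 2 / m * s 1) ^ 2 * s 1 ^ (m - 2)) t = 0 := by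
  have hg : HasFDerivAt (fun s => E s 1 - 2 / m * s 1) _ t :=
    (hE t ht |>.differentiableAt (hU.mem_nhds ht)).hasFDerivAt.fun_sub
      ((hasFDerivAt_apply 1 t).const_mul (2 / (m : ℂ)))
  rw [((hg.pow 2).fun_mul ((hasFDerivAt_apply 1 t).pow (m - 2))).fderiv]
  ext v
  have hE1 := (fderiv ℂ (fun s => E s 1) t).apply_eq_fin_two v
  rw [H.fderiv_apply_e₁ ht] at hE1
  simp only [nsmul_eq_mul, Nat.add_one_sub_one, pow_one, Nat.cast_ofNat, _root_.add_apply,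
    _root_.smul_apply, ContinuousLinearMap.proj_apply, smul_eq_mul,
    _root_.sub_apply, hE1, cons_val_one, cons_val_fin_one, mul_zero, zero_add,
    _root_.zero_apply]
  linear_combination (v 1 * (E t 1 - 2 / m * t 1)) * (H.fderiv_apply_e₂ ht).2
    - (v 1 * (E t 1 - 2 / m * t 1)) * 2 / m * natCast_mul_pow_sub_one_mul (m - 2) (t 1)
    - v 1 * (E t 1 - 2 / m * t 1) * t 1 ^ (m - 2) * two_div_mul_natCast_sub_two_add_two hm

theorem second_eq_two_div_mul (hm : 3 ≤ m) (hU : IsOpen U) (hUc : IsPreconnected U) (h0 : 0 ∈ U)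
    (hE : DifferentiableOn ℂ (fun t => E t 1) U) (H : IsEulerField m U E) :
    ∀ t ∈ U, E t 1 = 2 / m * t 1 := by
  have hg : DifferentiableOn ℂ (fun s => E s 1 - 2 / m * s 1) U :=
    hE.sub ((differentiableOn_apply 1 U).const_mul _)
  have hfirst_integral : ∀ t ∈ U, (E t 1 - 2 / m * t 1) ^ 2 * t 1 ^ (m - 2) = 0 := fun t ht =>
    (hU.is_const_of_fderiv_eq_zero hUc ((hg.pow 2).mul ((differentiableOn_apply 1 U).pow _))
      (fun s hs => H.fderiv_first_integral_eq_zero (by omega) hU hE hs) ht h0).trans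
      (by simp [zero_pow (by omega : m - 2 ≠ 0)])
  have hgz := hg.continuousOn.eqOn_zero_of_apply_ne_zero hU 1 fun t ht h1 => by
    simpa [h1] using hfirst_integral t ht
  exact fun t ht => sub_eq_zero.mp (hgz t ht)

end IsEulerField

theorem isEulerField_of_eqOn {m : ℕ} {U : Set ℂ²} {E : ℂ² → ℂ²} (hm : 2 ≤ m) (hU : IsOpen U)
    (c : ℂ) (hE : ∀ t ∈ U, E t = ![t 0 + c, 2 / m * t 1]) : IsEulerField m U E := by
  intro X Y hX hY t ht
  have hXt i := (hX i).differentiableAt (hU.mem_nhds ht)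
  have hYt i := (hY i).differentiableAt (hU.mem_nhds ht)
  have hE0 : ∀ v, fderiv ℂ (fun s => E s 0) t v = v 0 := fun v => by
    have h : (fun s => E s 0) =ᶠ[nhds t] fun s => s 0 + c :=
      Filter.eventually_of_mem (hU.mem_nhds ht) fun s hs => by simp [hE s hs]
    rw [h.fderiv_eq, ((hasFDerivAt_apply 0 t).add_const c).fderiv]
    rfl
  have hE1 : ∀ v, fderiv ℂ (fun s => E s 1) t v = 2 / m * v 1 := fun v => by
    have h : (fun s => E s 1) =ᶠ[nhds t] fun s => 2 / m * s 1 :=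
      Filter.eventually_of_mem (hU.mem_nhds ht) fun s hs => by simp [hE s hs]
    rw [h.fderiv_eq, ((hasFDerivAt_apply 1 t).const_mul _).fderiv]
    rfl
  refine funext (Fin.forall_fin_two.mpr ⟨?_, ?_⟩)
  · simp only [Pi.sub_apply, vbracket_apply]
    rw [fderiv_vmulI2_zero_apply m hXt hYt]
    simp only [hE t ht, cons_val_zero, cons_val_one, cons_val_fin_one, vmulI2, vbracket_apply,
      hE0, hE1]
    linear_combination (X t 1 * Y t 1) * (2 / m) * natCast_mul_pow_sub_one_mul (m - 2) (t 1)
      + X t 1 * Y t 1 * t 1 ^ (m - 2) * two_div_mul_natCast_sub_two_add_two hm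
  · simp only [Pi.sub_apply, vbracket_apply]
    rw [fderiv_vmulI2_one_apply m hXt hYt]
    simp only [hE t ht, cons_val_one, cons_val_fin_one, vmulI2, vbracket_apply, hE0, hE1]
    ring

/-- A holomorphic vector field `E` on a connected open neighbourhood `U` of `0` in `ℂ²`
satisfies `Lie_E(∘) = ∘` for the multiplication of `I₂(m)` if and only if
`E = (t₁ + c₁)∂₁ + (2/m)t₂∂₂` for some `c₁ ∈ ℂ`. -/
theorem statement10 (m : ℕ) (hm : 3 ≤ m)
    (U : Set (Fin 2 → ℂ)) (hU : IsOpen U) (hUc : IsPreconnected U)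
    (h0 : (0 : Fin 2 → ℂ) ∈ U)
    (Efld : (Fin 2 → ℂ) → (Fin 2 → ℂ))
    (hE : ∀ i, DifferentiableOn ℂ (fun t => Efld t i) U) :
    (∀ X Y : (Fin 2 → ℂ) → (Fin 2 → ℂ),
        (∀ i, DifferentiableOn ℂ (fun t => X t i) U) →
        (∀ i, DifferentiableOn ℂ (fun t => Y t i) U) →
        ∀ t ∈ U,
          vbracket Efld (vmulI2 m X Y) t - vmulI2 m (vbracket Efld X) Y t
            - vmulI2 m X (vbracket Efld Y) t = vmulI2 m X Y t)
      ↔ (∃ c₁ : ℂ, ∀ t ∈ U, Efld t = ![t 0 + c₁, (2 / (m : ℂ)) * t 1]) := by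
  refine ⟨fun H => ?_, fun ⟨c₁, hc₁⟩ => isEulerField_of_eqOn (by omega) hU c₁ hc₁⟩
  obtain ⟨c₁, hc₁⟩ := IsEulerField.exists_eq_add_first hU hUc (hE 0) H
  refine ⟨c₁, fun t ht => funext (Fin.forall_fin_two.mpr ⟨?_, ?_⟩)⟩
  · simpa using hc₁ t ht
  · simpa using IsEulerField.second_eq_two_div_mul hm hU hUc h0 (hE 1) H t ht
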